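/- arXiv:1312.0299 — 6 statements merged into one kernel-verified Lean document; each statement's English description precedes it below -/
import Mathlib

section
/- Let G = (A ∪ B, E) be a complete bipartite graph with a 2-colouring χ : E → {red, blue}. Then there exist subsets A' ⊆ A and B' ⊆ B with |A'| ≥ |A|/2 and |B'| ≥ |B|/2^|A| such that χ is constant on all edges between A' and B'. -/
/-- **Focusing Lemma.** Given a 2-colouring `χ` of the edges of the complete bipartite
graph with parts `A` and `B`, there exist `A' ⊆ A` and `B' ⊆ B` with `|A'| ≥ |A|/2` and
`|B'| ≥ |B|/2^|A|` such that `χ` is constant on all edges between `A'` and `B'`. -/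
theorem focusing_lemma {A B : Type} [Fintype A] [Fintype B] (χ : A → B → Bool) :
    ∃ (A' : Finset A) (B' : Finset B),
      (Fintype.card A : ℝ) / 2 ≤ A'.card ∧
      (Fintype.card B : ℝ) / 2 ^ (Fintype.card A) ≤ B'.card ∧
      ∃ c : Bool, ∀ a ∈ A', ∀ b ∈ B', χ a b = c := by
  classical
  set φ : B → (A → Bool) := fun b a => χ a b with hφ
  -- pigeonhole: some pattern f has a big fiber
  have hsum : (Fintype.card B : ℝ)
      = ∑ f : A → Bool, ((Finset.univ.filter (fun b => φ b = f)).card : ℝ) := by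
    rw [← Nat.cast_sum]
    norm_cast
    exact Finset.card_eq_sum_card_fiberwise (fun b _ => Finset.mem_univ _)
  have hconst : ∑ _f : A → Bool, (Fintype.card B : ℝ) / 2 ^ (Fintype.card A)
      ≤ ∑ f : A → Bool, ((Finset.univ.filter (fun b => φ b = f)).card : ℝ) := by
    rw [Finset.sum_const, Finset.card_univ, Fintype.card_fun, Fintype.card_bool,
      nsmul_eq_mul, ← hsum]
    push_cast
    rw [mul_div_cancel₀]
    positivity
  obtain ⟨f, -, hf⟩ := Finset.exists_le_of_sum_le Finset.univ_nonempty hconst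
  set B' : Finset B := Finset.univ.filter (fun b => φ b = f) with hB'
  -- majority colour class in A
  have hA : ((Finset.univ.filter (fun a => f a = true)).card : ℝ)
      + ((Finset.univ.filter (fun a => f a = false)).card : ℝ) = Fintype.card A := by
    norm_cast
    rw [← Finset.card_union_of_disjoint]
    · rw [← Finset.card_univ]
      congr 1
      ext a
      simp [Bool.eq_false_or_eq_true (f a), or_comm]
    · refine Finset.disjoint_left.2 fun a ha ha' => ?_
      simp only [Finset.mem_filter] at ha ha'
      simp [ha.2] at ha'
  by_cases hc : (Fintype.card A : ℝ) / 2 ≤ (Finset.univ.filter (fun a => f a = true)).card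
  · refine ⟨Finset.univ.filter (fun a => f a = true), B', hc, hf, true, fun a ha b hb => ?_⟩
    simp only [hB', Finset.mem_filter] at ha hb
    have : φ b a = f a := by rw [hb.2]
    simpa [hφ, ha.2] using this
  · refine ⟨Finset.univ.filter (fun a => f a = false), B', ?_, hf, false, fun a ha b hb => ?_⟩
    · push_neg at hc
      linarith
    · simp only [hB', Finset.mem_filter] at ha hb
      have : φ b a = f a := by rw [hb.2]
      simpa [hφ, ha.2] using this
end

section
/- For every graph H with at least one edge, s(H) ≥ 2δ(H) - 1, where δ(H) is the minimum degree of H and s(H) is the smallest minimum degree over all H-Ramsey-minimal graphs. -/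
/-- A monochromatic copy of `H` in `G` of colour `c` under the edge-colouring `χ`. -/
def MonoCopy {α β : Type*} (H : SimpleGraph α) (G : SimpleGraph β)
    (χ : β → β → Bool) (c : Bool) : Prop :=
  ∃ f : α ↪ β, (∀ a b, H.Adj a b → G.Adj (f a) (f b)) ∧
    ∀ a b, H.Adj a b → χ (f a) (f b) = c

/-- `G` is Ramsey for `H`: every symmetric 2-colouring of the edges of `G`
contains a monochromatic copy of `H`. -/
def IsRamseyFor {α β : Type*} (H : SimpleGraph α) (G : SimpleGraph β) : Prop :=
  ∀ χ : β → β → Bool, (∀ x y, χ x y = χ y x) → ∃ c, MonoCopy H G χ c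
/-- `G` is Ramsey-minimal for `H`: `G` is Ramsey for `H` but no proper subgraph is. -/
def RamseyMinimal {α : Type*} (H : SimpleGraph α) {n : ℕ} (G : SimpleGraph (Fin n)) : Prop :=
  IsRamseyFor H G ∧ ∀ G' : G.Subgraph, G' ≠ ⊤ → ¬ IsRamseyFor H G'.coe

/-- Minimum degree of a finite graph. -/
noncomputable def minDeg {V : Type*} [Fintype V] (G : SimpleGraph V) : ℕ := by
  classical exact G.minDegree

/-- `s(H)`: the smallest minimum degree over all Ramsey-minimal graphs for `H`. -/
noncomputable def sParam {α : Type*} (H : SimpleGraph α) : ℕ :=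
  sInf { d | ∃ (n : ℕ) (G : SimpleGraph (Fin n)), RamseyMinimal H G ∧ minDeg G = d }

/-!
If `G` is Ramsey-minimal for `H` and `v` is a vertex of `G` of degree at most `2δ(H) - 2`, split
the neighbourhood of `v` into two parts of size at most `δ(H) - 1`, colour the edges from `v` to
the first part red and to the second blue, and colour `G - v`, which by minimality is not Ramsey
for `H`, without a monochromatic copy of `H`. A monochromatic copy of `H` in `G` must then pass
through `v`; but the vertex of `H` sent to `v` has at least `δ(H)` neighbours, all sent into one
part. Ramsey-minimal graphs exist: by Ramsey's theorem a large complete graph is Ramsey for `H`,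
and a Ramsey graph for `H` minimising `|V| + |E|` is Ramsey-minimal.
-/

open Finset SimpleGraph

variable {α β γ V : Type*}

theorem minDeg_eq_minDegree [Fintype V] (G : SimpleGraph V) [DecidableRel G.Adj] :
    minDeg G = G.minDegree := by
  unfold minDeg
  congr!

theorem minDeg_le_degree [Fintype V] (G : SimpleGraph V) [DecidableRel G.Adj]
    (v : V) : minDeg G ≤ G.degree v := by
  rw [minDeg_eq_minDegree]
  exact G.minDegree_le_degree v

theorem exists_monochromatic_subset [DecidableEq β] (χ : β → β → Bool)
    (hχ : ∀ x y, χ x y = χ y x) (k : Bool → ℕ) (s : Finset β)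
    (hs : 2 ^ (k true + k false) ≤ #s) :
    ∃ c, ∃ t ⊆ s, #t = k c ∧ (t : Set β).Pairwise fun x y => χ x y = c := by
  induction hn : k true + k false generalizing k s with
  | zero => exact ⟨true, ∅, empty_subset s, by simp; omega, by simp⟩
  | succ n ih =>
  by_cases hk : ∃ c, k c = 0
  · obtain ⟨c, hc⟩ := hk
    exact ⟨c, ∅, empty_subset s, hc ▸ card_empty, by simp⟩
  push Not at hk
  obtain ⟨v, hv⟩ : s.Nonempty := card_pos.mp (lt_of_lt_of_le (Nat.two_pow_pos _) hs)
  set N : Bool → Finset β := fun c => {w ∈ s.erase v | χ v w = c}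
  have hN : ∃ c, 2 ^ n ≤ #(N c) := by
    have hsplit : #(N true) + #(N false) = #s - 1 := by
      simpa [N, card_erase_of_mem hv] using
        card_filter_add_card_filter_not (s := s.erase v) (fun w => χ v w = true)
    by_contra! h
    have := h true; have := h false
    rw [hn, pow_succ] at hs
    omega
  obtain ⟨c, hc⟩ := hN
  have hNs : N c ⊆ s := (filter_subset _ _).trans (erase_subset _ _)
  set k' := Function.update k c (k c - 1)
  have hk' : k' true + k' false = n := by
    have := hk c
    cases c <;> simp [k'] <;> omega
  obtain ⟨c', t, htN, htk, ht⟩ := ih k' (N c) (hk' ▸ hc) hk'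
  by_cases hcc : c' = c
  · subst hcc
    have hvt : v ∉ t := fun h => by simpa [N] using htN h
    refine ⟨c', insert v t, insert_subset hv (htN.trans hNs), ?_, ?_⟩
    · rw [card_insert_of_notMem hvt, htk]
      simpa [k'] using Nat.sub_add_cancel (Nat.pos_of_ne_zero (hk c'))
    · rw [coe_insert, Set.pairwise_insert]
      refine ⟨ht, fun w hw _ => ?_⟩
      have hvw : χ v w = c' := (mem_filter.mp (htN hw)).2
      exact ⟨hvw, hχ w v ▸ hvw⟩
  · exact ⟨c', t, htN.trans hNs, by simpa [k', hcc] using htk, ht⟩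

theorem IsRamseyFor.of_copy {H : SimpleGraph α} {G : SimpleGraph β}
    {G' : SimpleGraph γ} (hG : IsRamseyFor H G) (φ : G.Copy G') : IsRamseyFor H G' := by
  intro χ hχ
  obtain ⟨c, f, hadj, hcol⟩ := hG (fun x y => χ (φ x) (φ y)) fun x y => hχ _ _
  exact ⟨c, f.trans φ.toEmbedding, fun a b hab => φ.toHom.map_adj (hadj a b hab), hcol⟩

theorem isRamseyFor_top [Fintype α] (H : SimpleGraph α) :
    IsRamseyFor H (⊤ : SimpleGraph (Fin (2 ^ (Fintype.card α + Fintype.card α)))) := by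
  classical
  intro χ hχ
  obtain ⟨c, t, -, htk, ht⟩ :=
    exists_monochromatic_subset χ hχ (fun _ => Fintype.card α) univ (by simp)
  let f : α ↪ Fin _ :=
    (Fintype.equivOfCardEq (by simpa using htk.symm) : α ≃ t).toEmbedding.trans
      (Function.Embedding.subtype _)
  refine ⟨c, f, fun a b hab => by simpa using f.injective.ne hab.ne, fun a b hab => ?_⟩
  exact ht (by simp [f]) (by simp [f]) (f.injective.ne hab.ne)

theorem SimpleGraph.Subgraph.ncard_verts_add_ncard_edgeSet_lt [Finite V]
    {G : SimpleGraph V} {G₁ G₂ : G.Subgraph} (h : G₁ < G₂) :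
    G₁.verts.ncard + G₁.edgeSet.ncard < G₂.verts.ncard + G₂.edgeSet.ncard := by
  have hv : G₁.verts ⊆ G₂.verts := h.le.1
  have he : G₁.edgeSet ⊆ G₂.edgeSet := edgeSet_mono h.le
  have := Set.ncard_le_ncard hv
  have := Set.ncard_le_ncard he
  by_contra! hle
  have hv_eq := Set.eq_of_subset_of_ncard_le hv (by omega)
  have he_eq := Set.eq_of_subset_of_ncard_le he (by omega)
  refine h.ne (Subgraph.ext hv_eq ?_)
  ext x y
  rw [← Subgraph.mem_edgeSet, he_eq, Subgraph.mem_edgeSet]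

theorem SimpleGraph.Subgraph.ncard_edgeSet_coe {G : SimpleGraph V}
    (G' : G.Subgraph) : G'.coe.edgeSet.ncard = G'.edgeSet.ncard := by
  rw [← image_coe_edgeSet_coe, Set.ncard_image_of_injective _ (Sym2.map.injective
    Subtype.val_injective)]

theorem exists_ramseyMinimal_of_isRamseyFor (H : SimpleGraph α) {n : ℕ}
    (G : SimpleGraph (Fin n)) (hG : IsRamseyFor H G) :
    ∃ (n' : ℕ) (G' : SimpleGraph (Fin n')), RamseyMinimal H G' := by
  classical
  induction hμ : n + G.edgeSet.ncard using Nat.strong_induction_on generalizing n with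
  | _ μ ih =>
  by_cases hmin : ∀ G' : G.Subgraph, G' ≠ ⊤ → ¬ IsRamseyFor H G'.coe
  · exact ⟨n, G, hG, hmin⟩
  push Not at hmin
  obtain ⟨G', hne, hG'⟩ := hmin
  let e := G'.coe.overFinIso rfl
  refine ih _ ?_ _ (hG'.of_copy e.toCopy) rfl
  have hlt := Subgraph.ncard_verts_add_ncard_edgeSet_lt (lt_top_iff_ne_top.mpr hne)
  rw [← Set.ncard_congr' e.mapEdgeSet, G'.ncard_edgeSet_coe, ← hμ]
  rw [Subgraph.verts_top, Set.ncard_univ, Nat.card_eq_fintype_card, Fintype.card_fin,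
    Subgraph.edgeSet_top] at hlt
  rwa [← Nat.card_eq_fintype_card, Nat.card_coe_set_eq]

theorem exists_ramseyMinimal [Fintype α] (H : SimpleGraph α) :
    ∃ (n : ℕ) (G : SimpleGraph (Fin n)), RamseyMinimal H G :=
  exists_ramseyMinimal_of_isRamseyFor H _ (isRamseyFor_top H)

theorem IsRamseyFor.exists_minDeg_le_card_filter_neighborFinset [Fintype α] [Fintype β]
    {H : SimpleGraph α} {G : SimpleGraph β} [DecidableRel G.Adj] (hG : IsRamseyFor H G) (v : β)
    (hv : ¬ IsRamseyFor H ((⊤ : G.Subgraph).deleteVerts {v}).coe) (σ : β → Bool) :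
    ∃ c, minDeg H ≤ #{w ∈ G.neighborFinset v | σ w = c} := by
  classical
  set S := (⊤ : G.Subgraph).deleteVerts {v}
  have hmem : ∀ {x}, x ∈ S.verts ↔ x ≠ v := by simp [S]
  simp only [IsRamseyFor, not_forall, not_exists] at hv
  obtain ⟨χ₀, hχ₀, hfree⟩ := hv
  let χ : β → β → Bool := fun x y =>
    if h : x ≠ v ∧ y ≠ v then χ₀ ⟨x, hmem.2 h.1⟩ ⟨y, hmem.2 h.2⟩
    else σ (if x = v then y else x)
  have hχ : ∀ x y, χ x y = χ y x := by
    intro x y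
    simp only [χ]
    split_ifs <;> grind
  obtain ⟨c, f, hadj, hcol⟩ := hG χ hχ
  refine ⟨c, ?_⟩
  by_cases hv_range : ∃ a, f a = v
  · obtain ⟨a, rfl⟩ := hv_range
    calc minDeg H ≤ H.degree a := minDeg_le_degree H a
      _ = #(H.neighborFinset a) := (card_neighborFinset_eq_degree ..).symm
      _ ≤ _ := card_le_card_of_injOn f (fun b hb => ?_) f.injective.injOn
    have hab : H.Adj a b := by simpa using hb
    simp [hadj a b hab, ← hcol a b hab, χ]
  · push Not at hv_range
    exfalso
    refine hfree c ⟨f.codRestrict S.verts fun a => hmem.2 (hv_range a), fun a b hab => ?_,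
      fun a b hab => ?_⟩
    · simpa [S, hv_range a, hv_range b] using hadj a b hab
    · simpa [χ, hv_range a, hv_range b] using hcol a b hab

theorem RamseyMinimal.two_mul_minDeg_sub_one_le_degree [Fintype α]
    {H : SimpleGraph α} {n : ℕ} {G : SimpleGraph (Fin n)} [DecidableRel G.Adj]
    (hG : RamseyMinimal H G) (v : Fin n) : 2 * minDeg H - 1 ≤ G.degree v := by
  classical
  have hproper : (⊤ : G.Subgraph).deleteVerts {v} ≠ ⊤ := fun h => by
    simpa using congrArg (v ∈ ·.verts) h
  obtain ⟨A, hA, hAcard⟩ := exists_subset_card_eq (Nat.div_le_self #(G.neighborFinset v) 2)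
  obtain ⟨c, hc⟩ := hG.1.exists_minDeg_le_card_filter_neighborFinset v (hG.2 _ hproper) (· ∈ A)
  have hsplit := card_filter_add_card_filter_not (s := G.neighborFinset v) (· ∈ A)
  rw [filter_mem_eq_inter, inter_eq_right.2 hA, hAcard, card_neighborFinset_eq_degree] at hsplit
  cases c <;> simp only [decide_eq_true_eq, decide_eq_false_iff_not, filter_mem_eq_inter,
    inter_eq_right.2 hA, hAcard, card_neighborFinset_eq_degree] at hc <;> omega

theorem RamseyMinimal.two_mul_minDeg_sub_one_le_minDeg [Fintype α]
    {H : SimpleGraph α} {n : ℕ} {G : SimpleGraph (Fin n)} (hG : RamseyMinimal H G) :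
    2 * minDeg H - 1 ≤ minDeg G := by
  classical
  rcases isEmpty_or_nonempty (Fin n) with hn | hn
  · obtain ⟨-, f, -⟩ := hG.1 (fun _ _ => true) fun _ _ => rfl
    have : IsEmpty α := ⟨fun a => hn.elim (f a)⟩
    simp [minDeg_eq_minDegree]
  · rw [minDeg_eq_minDegree]
    exact G.le_minDegree_of_forall_le_degree _ hG.two_mul_minDeg_sub_one_le_degree

theorem exists_ramseyMinimal_minDeg_eq_sParam [Fintype α] (H : SimpleGraph α) :
    ∃ (n : ℕ) (G : SimpleGraph (Fin n)), RamseyMinimal H G ∧ minDeg G = sParam H := by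
  obtain ⟨n, G, hG⟩ := exists_ramseyMinimal H
  exact Nat.sInf_mem
    (s := {d | ∃ (n : ℕ) (G : SimpleGraph (Fin n)), RamseyMinimal H G ∧ minDeg G = d})
    ⟨minDeg G, n, G, hG, rfl⟩

theorem two_minDeg_sub_one_le_sParam_general {m : ℕ} (H : SimpleGraph (Fin m)) :
    2 * minDeg H - 1 ≤ sParam H := by
  obtain ⟨n, G, hG, hdeg⟩ := exists_ramseyMinimal_minDeg_eq_sParam H
  exact hdeg ▸ hG.two_mul_minDeg_sub_one_le_minDeg

/-- For every graph `H` with at least one edge, `s(H) ≥ 2·δ(H) - 1`. -/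
theorem two_minDeg_sub_one_le_sParam {m : ℕ} (H : SimpleGraph (Fin m))
    (hH : ∃ x y, H.Adj x y) :
    2 * minDeg H - 1 ≤ sParam H :=
  two_minDeg_sub_one_le_sParam_general H
end

section
/- f(k,k) = 0 for every k ≥ 2. That is, the graph K_k + K_k (the disjoint union of two copies of K_k) is not Ramsey-equivalent to K_k. -/
/-- `H` and `H'` are Ramsey-equivalent: every graph is Ramsey for `H` iff it is for `H'`. -/
def RamseyEquiv {α β : Type*} (H : SimpleGraph α) (H' : SimpleGraph β) : Prop :=
  ∀ (n : ℕ) (G : SimpleGraph (Fin n)), IsRamseyFor H G ↔ IsRamseyFor H' G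
/-- `K_k + f·K_t`: the disjoint union of `K_k` and `f` copies of `K_t`. -/
def cliquesUnion (k f t : ℕ) : SimpleGraph (Fin k ⊕ Fin f × Fin t) :=
  SimpleGraph.fromRel (fun x y =>
    (∃ a b, x = Sum.inl a ∧ y = Sum.inl b) ∨
    (∃ i a b, x = Sum.inr (i, a) ∧ y = Sum.inr (i, b)))

/-!
Take a graph `G` on a fixed finite vertex set that is Ramsey for `K_k` and minimal with this
property under deleting edges (one exists, since by Ramsey's theorem a large complete graph is
Ramsey for `K_k`), and a vertex `v` that is not isolated. Deleting the edges at `v` destroys the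
Ramsey property, so some colouring `χ` of the remaining edges has no monochromatic `K_k`. Extend
`χ` by any colour on the edges at `v`: now every monochromatic `K_k` of `G` passes through `v`, so
no two of them are disjoint and there is no monochromatic `K_k + K_k`.
-/

open Finset SimpleGraph

theorem exists_isNClique_or_isNClique_compl :
    ∀ s t : ℕ, ∃ n, ∀ {V : Type*} (G : SimpleGraph V) (S : Finset V), n ≤ #S →
      ∃ A ⊆ S, G.IsNClique s A ∨ Gᶜ.IsNClique t A
  | 0, _ => ⟨0, fun _ _ _ => ⟨∅, empty_subset _, .inl (isNClique_zero.2 rfl)⟩⟩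
  | _, 0 => ⟨0, fun _ _ _ => ⟨∅, empty_subset _, .inr (isNClique_zero.2 rfl)⟩⟩
  | s + 1, t + 1 => by
    obtain ⟨n₁, h₁⟩ := exists_isNClique_or_isNClique_compl s (t + 1)
    obtain ⟨n₂, h₂⟩ := exists_isNClique_or_isNClique_compl (s + 1) t
    refine ⟨n₁ + n₂ + 1, fun {V} G S hS => ?_⟩
    classical
    obtain ⟨v, hv⟩ : S.Nonempty := card_pos.1 (by omega)
    have hsplit :
        n₁ ≤ #((S.erase v).filter (G.Adj v)) ∨ n₂ ≤ #((S.erase v).filter (Gᶜ.Adj v)) := by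
      have hcompl : (S.erase v).filter (Gᶜ.Adj v) = (S.erase v).filter (¬G.Adj v ·) :=
        filter_congr fun w hw => by simp [compl_adj, (ne_of_mem_erase hw).symm]
      have := card_filter_add_card_filter_not (s := S.erase v) (G.Adj v)
      rw [card_erase_of_mem hv] at this
      rw [hcompl]
      omega
    have hinsert : ∀ {H : SimpleGraph V} [DecidableRel H.Adj] {A : Finset V} {m : ℕ},
        A ⊆ (S.erase v).filter (H.Adj v) → H.IsNClique m A →
        insert v A ⊆ S ∧ H.IsNClique (m + 1) (insert v A) := fun hA hA' =>
      ⟨insert_subset hv (hA.trans ((filter_subset _ _).trans (erase_subset _ _))),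
        hA'.insert fun _ hb => (mem_filter.1 (hA hb)).2⟩
    have hsub : ∀ {A : Finset V} {p : V → Prop} [DecidablePred p],
        A ⊆ (S.erase v).filter p → A ⊆ S :=
      fun hA => hA.trans ((filter_subset _ _).trans (erase_subset _ _))
    rcases hsplit with h | h
    · obtain ⟨A, hA, hA' | hA'⟩ := h₁ G _ h
      · exact ⟨insert v A, (hinsert hA hA').1, .inl (hinsert hA hA').2⟩
      · exact ⟨A, hsub hA, .inr hA'⟩
    · obtain ⟨A, hA, hA' | hA'⟩ := h₂ G _ h
      · exact ⟨A, hsub hA, .inl hA'⟩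
      · exact ⟨insert v A, (hinsert hA hA').1, .inr (hinsert hA hA').2⟩

section

variable {α V : Type*} {H : SimpleGraph α} {G : SimpleGraph V} {χ : V → V → Bool} {c : Bool}

def colourGraph (χ : V → V → Bool) (c : Bool) : SimpleGraph V where
  Adj x y := x ≠ y ∧ χ x y = c ∧ χ y x = c
  symm := ⟨fun _ _ h => ⟨h.1.symm, h.2.2, h.2.1⟩⟩
  loopless := ⟨fun _ h => h.1 rfl⟩

@[simp]
theorem colourGraph_adj {x y : V} : (colourGraph χ c).Adj x y ↔ x ≠ y ∧ χ x y = c ∧ χ y x = c :=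
  Iff.rfl

theorem compl_colourGraph_true (hχ : ∀ x y, χ x y = χ y x) :
    (colourGraph χ true)ᶜ = colourGraph χ false := by
  ext x y
  rw [compl_adj, colourGraph_adj, colourGraph_adj, hχ y x]
  cases χ x y <;> simp

theorem monoCopy_iff_isContained : MonoCopy H G χ c ↔ H ⊑ G ⊓ colourGraph χ c := by
  constructor
  · rintro ⟨f, hadj, hcol⟩
    exact ⟨⟨⟨f, fun hab => ⟨hadj _ _ hab, colourGraph_adj.2 ⟨fun h => hab.ne (f.injective h),
      hcol _ _ hab, hcol _ _ hab.symm⟩⟩⟩, f.injective⟩⟩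
  · rintro ⟨f⟩
    exact ⟨⟨f, f.injective⟩, fun _ _ hab => (f.toHom.map_adj hab).1,
      fun _ _ hab => (colourGraph_adj.1 (f.toHom.map_adj hab).2).2.1⟩

theorem exists_isRamseyFor_completeGraph (k : ℕ) :
    ∃ n, IsRamseyFor (completeGraph (Fin k)) (completeGraph (Fin n)) := by
  obtain ⟨n, hn⟩ := exists_isNClique_or_isNClique_compl k k
  refine ⟨n, fun χ hχ => ?_⟩
  have hclique : ∃ c, ¬(colourGraph χ c).CliqueFree k := by
    obtain ⟨A, -, hA | hA⟩ := hn (colourGraph χ true) univ (by simp)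
    · exact ⟨true, hA.not_cliqueFree⟩
    · exact ⟨false, compl_colourGraph_true hχ ▸ hA.not_cliqueFree⟩
  obtain ⟨c, hc⟩ := hclique
  refine ⟨c, monoCopy_iff_isContained.2 ?_⟩
  rwa [completeGraph, top_inf_eq, ← not_cliqueFree_iff_top_isContained]

theorem IsRamseyFor.exists_adj (h : IsRamseyFor H G) {a b : α} (hab : H.Adj a b) :
    ∃ x y, G.Adj x y :=
  let ⟨_, _, hadj, _⟩ := h (fun _ _ => true) fun _ _ => rfl
  ⟨_, _, hadj a b hab⟩

theorem SimpleGraph.deleteIncidenceSet_lt {v w : V} (h : G.Adj v w) : G.deleteIncidenceSet v < G :=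
  (deleteIncidenceSet_le G v).lt_of_ne fun hG => by
    rw [← hG, deleteIncidenceSet_adj] at h
    exact h.2.1 rfl

def cliquesUnion.inlCopy (k f t : ℕ) : Copy (completeGraph (Fin k)) (cliquesUnion k f t) :=
  ⟨⟨Sum.inl, fun hab => by simpa [cliquesUnion] using hab⟩, Sum.inl_injective⟩

def cliquesUnion.inrCopy {k f t : ℕ} (i : Fin f) :
    Copy (completeGraph (Fin t)) (cliquesUnion k f t) :=
  ⟨⟨fun a => Sum.inr (i, a), fun hab => by simpa [cliquesUnion] using hab⟩,
    fun _ _ h => by simpa using h⟩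

theorem monoCopy_deleteIncidenceSet {f : α ↪ V} {v : V} {χ χ' : V → V → Bool} {c : Bool}
    (hadj : ∀ a b, H.Adj a b → G.Adj (f a) (f b)) (hcol : ∀ a b, H.Adj a b → χ (f a) (f b) = c)
    (hv : v ∉ Set.range f) (hχ : ∀ x y, x ≠ v → y ≠ v → χ x y = χ' x y) :
    MonoCopy H (G.deleteIncidenceSet v) χ' c := by
  have hfv : ∀ a, f a ≠ v := fun a h => hv ⟨a, h⟩
  refine ⟨f, fun a b hab => deleteIncidenceSet_adj.2 ⟨hadj a b hab, hfv a, hfv b⟩,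
    fun a b hab => ?_⟩
  rw [← hχ _ _ (hfv a) (hfv b), hcol a b hab]

theorem not_isRamseyFor_cliquesUnion_of_deleteIncidenceSet {k : ℕ} (v : V)
    (h : ¬IsRamseyFor (completeGraph (Fin k)) (G.deleteIncidenceSet v)) :
    ¬IsRamseyFor (cliquesUnion k 1 k) G := by
  classical
  simp only [IsRamseyFor, not_forall, not_exists] at h ⊢
  obtain ⟨χ₀, hχ₀, hno⟩ := h
  let χ : V → V → Bool := fun x y => if x = v ∨ y = v then true else χ₀ x y
  refine ⟨χ, fun x y => by simp only [χ, or_comm, hχ₀ x y], fun c ⟨f, hadj, hcol⟩ => ?_⟩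
  have hpart (e : Copy (completeGraph (Fin k)) (cliquesUnion k 1 k)) :
      v ∈ Set.range (e.toEmbedding.trans f) := by
    by_contra hv
    refine hno c (monoCopy_deleteIncidenceSet (χ := χ)
      (fun a b hab => hadj _ _ (e.toHom.map_adj hab))
      (fun a b hab => hcol _ _ (e.toHom.map_adj hab)) hv fun x y hx hy => ?_)
    simp [χ, hx, hy]
  obtain ⟨a, ha⟩ := hpart (cliquesUnion.inlCopy k 1 k)
  obtain ⟨b, hb⟩ := hpart (cliquesUnion.inrCopy 0)
  exact Sum.inl_ne_inr (f.injective (ha.trans hb.symm))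

end

/-- `f(k,k) = 0`: the disjoint union `K_k + K_k` of two copies of `K_k` is not
Ramsey-equivalent to `K_k`. -/
theorem not_ramseyEquiv_clique_add_clique (k : ℕ) (hk : 2 ≤ k) :
    ¬ RamseyEquiv (SimpleGraph.completeGraph (Fin k)) (cliquesUnion k 1 k) := by
  intro h
  obtain ⟨n, hn⟩ := exists_isRamseyFor_completeGraph k
  obtain ⟨G, hG⟩ := exists_minimal_of_wellFoundedLT
    (IsRamseyFor (completeGraph (Fin k)) : SimpleGraph (Fin n) → Prop) ⟨⊤, hn⟩
  obtain ⟨v, w, hvw⟩ := hG.prop.exists_adj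
    (show (completeGraph (Fin k)).Adj ⟨0, by omega⟩ ⟨1, by omega⟩ by simp)
  exact not_isRamseyFor_cliquesUnion_of_deleteIncidenceSet v
    (hG.not_prop_of_lt (deleteIncidenceSet_lt hvw)) ((h n G).1 hG.prop)
end

section
/- f(k,1) = R(k,k) - k for every k ≥ 2. That is, K_k is Ramsey-equivalent to K_k + f·K_1 (K_k plus f isolated vertices) if and only if f ≤ R(k,k) - k. -/
/-- The (asymmetric) Ramsey number `R(k,s)`: the least `n` such that every symmetric
2-colouring of the complete graph on `n` vertices has a red `K_k` or a blue `K_s`. -/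
noncomputable def ramsey2 (k s : ℕ) : ℕ :=
  sInf { n | ∀ χ : Fin n → Fin n → Bool, (∀ x y, χ x y = χ y x) →
    (∃ S : Finset (Fin n), S.card = k ∧ ∀ x ∈ S, ∀ y ∈ S, x ≠ y → χ x y = true) ∨
    (∃ S : Finset (Fin n), S.card = s ∧ ∀ x ∈ S, ∀ y ∈ S, x ≠ y → χ x y = false) }

/-!
A monochromatic `K_k + f·K_1` is just a monochromatic `K_k` in a host graph with at least `k + f`
vertices, so a graph is Ramsey for `K_k + f·K_1` iff it is Ramsey for `K_k` and has at least `k + f`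
vertices. Every graph Ramsey for `K_k` has at least `R(k,k)` vertices, while `K_{R(k,k)}` itself is
Ramsey for `K_k`; hence the two graphs are Ramsey-equivalent iff `k + f ≤ R(k,k)`. That `R(k,k)` is
finite, so that the infimum defining it is attained, comes from the Erdős–Szekeres bound.
-/

open Finset Function

section Monochromatic

variable {α : Type*} {χ : α → α → Bool} {c : Bool}

def HasMonoSubset (χ : α → α → Bool) (c : Bool) (k : ℕ) (V : Finset α) : Prop :=
  ∃ S ⊆ V, #S = k ∧ (S : Set α).Pairwise (χ · · = c)

theorem hasMonoSubset_zero (V : Finset α) : HasMonoSubset χ c 0 V :=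
  ⟨∅, empty_subset V, card_empty, by simp⟩

theorem HasMonoSubset.mono {k : ℕ} {V W : Finset α} (h : HasMonoSubset χ c k V) (hVW : V ⊆ W) :
    HasMonoSubset χ c k W :=
  let ⟨S, hSV, hS⟩ := h
  ⟨S, hSV.trans hVW, hS⟩

theorem HasMonoSubset.insert_of_filter [DecidableEq α] (hχ : ∀ x y, χ x y = χ y x) {k : ℕ} {v : α}
    {V : Finset α} (hv : v ∈ V) (h : HasMonoSubset χ c k ((V.erase v).filter (χ v · = c))) :
    HasMonoSubset χ c (k + 1) V := by
  obtain ⟨S, hSN, hSk, hS⟩ := h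
  have hcol : ∀ x ∈ S, χ v x = c := fun x hx => (mem_filter.mp (hSN hx)).2
  have hvS : v ∉ S := fun hvS => by simpa using (mem_filter.mp (hSN hvS)).1
  refine ⟨insert v S, insert_subset hv ((hSN.trans (filter_subset _ _)).trans (erase_subset v V)),
    by rw [card_insert_of_notMem hvS, hSk], ?_⟩
  rw [coe_insert]
  exact hS.insert fun x hx _ => ⟨hcol x hx, hχ x v ▸ hcol x hx⟩

/-- The Erdős–Szekeres bound. -/
theorem hasMonoSubset_or_of_choose_le [DecidableEq α] (hχ : ∀ x y, χ x y = χ y x) :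
    ∀ (k s : ℕ) (V : Finset α), (k + s).choose k ≤ #V →
      HasMonoSubset χ true k V ∨ HasMonoSubset χ false s V
  | 0, _, V, _ => Or.inl (hasMonoSubset_zero V)
  | _ + 1, 0, V, _ => Or.inr (hasMonoSubset_zero V)
  | k + 1, s + 1, V, hV => by
    have hpascal :
        (k + 1 + (s + 1)).choose (k + 1) = (k + (s + 1)).choose k + (k + 1 + s).choose (k + 1) := by
      rw [show k + 1 + (s + 1) = k + s + 1 + 1 by omega, show k + (s + 1) = k + s + 1 by omega,
        show k + 1 + s = k + s + 1 by omega, Nat.choose_succ_succ']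
    obtain ⟨v, hv⟩ : V.Nonempty := card_pos.mp ((Nat.choose_pos (by omega)).trans_le hV)
    set red := (V.erase v).filter (χ v · = true)
    set blue := (V.erase v).filter (χ v · = false)
    have hcard : #red + #blue + 1 = #V := by
      have := card_filter_add_card_filter_not (s := V.erase v) (χ v · = true)
      simp only [Bool.not_eq_true] at this
      rw [this, card_erase_add_one hv]
    have hsub : ∀ c, (V.erase v).filter (χ v · = c) ⊆ V := fun _ =>
      (filter_subset _ _).trans (erase_subset v V)
    -- by Pascal's rule, one of the two colour classes around `v` is large enough
    by_cases hred : (k + (s + 1)).choose k ≤ #red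
    · exact (hasMonoSubset_or_of_choose_le hχ k (s + 1) red hred).imp
        (·.insert_of_filter hχ hv) (·.mono (hsub _))
    · have hblue : (k + 1 + s).choose (k + 1) ≤ #blue := by omega
      exact (hasMonoSubset_or_of_choose_le hχ (k + 1) s blue hblue).imp
        (·.mono (hsub _)) (·.insert_of_filter hχ hv)

theorem hasMonoSubset_univ_iff [Fintype α] {k : ℕ} :
    HasMonoSubset χ c k univ ↔ ∃ S : Finset α, #S = k ∧ ∀ x ∈ S, ∀ y ∈ S, x ≠ y → χ x y = c := by
  simp [HasMonoSubset, Set.Pairwise]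

end Monochromatic

/-- The arrow relation `n → (k, s)`. -/
def RamseyArrows (n k s : ℕ) : Prop :=
  ∀ χ : Fin n → Fin n → Bool, (∀ x y, χ x y = χ y x) →
    HasMonoSubset χ true k univ ∨ HasMonoSubset χ false s univ

theorem ramsey2_eq_sInf (k s : ℕ) : ramsey2 k s = sInf {n | RamseyArrows n k s} := by
  simp only [RamseyArrows, hasMonoSubset_univ_iff]
  rfl

theorem ramseyArrows_ramsey2 (k s : ℕ) : RamseyArrows (ramsey2 k s) k s := by
  rw [ramsey2_eq_sInf]
  exact Nat.sInf_mem (s := {n | RamseyArrows n k s}) ⟨(k + s).choose k, fun χ hχ =>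
    hasMonoSubset_or_of_choose_le hχ k s univ (by simp)⟩

theorem ramsey2_le {k s n : ℕ} (h : RamseyArrows n k s) : ramsey2 k s ≤ n :=
  (ramsey2_eq_sInf k s).trans_le (Nat.sInf_le h)

section Copies

variable {α β : Type*} {H : SimpleGraph α} {G : SimpleGraph β} {χ : β → β → Bool} {c : Bool}
  {k : ℕ}

theorem IsRamseyFor.card_le [Fintype α] [Fintype β] (h : IsRamseyFor H G) :
    Fintype.card α ≤ Fintype.card β :=
  let ⟨_, e, _⟩ := h (fun _ _ => true) fun _ _ => rfl
  Fintype.card_le_of_embedding e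

theorem MonoCopy.hasMonoSubset [Fintype β] [DecidableEq β]
    (h : MonoCopy (SimpleGraph.completeGraph (Fin k)) G χ c) : HasMonoSubset χ c k univ := by
  obtain ⟨e, -, hcol⟩ := h
  refine ⟨univ.map e, subset_univ _, by simp, ?_⟩
  simp only [coe_map, coe_univ, Set.image_univ]
  rintro _ ⟨a, rfl⟩ _ ⟨b, rfl⟩ hab
  exact hcol a b fun hab' => hab (congrArg e hab')

theorem HasMonoSubset.monoCopy_top {V : Finset β} (h : HasMonoSubset χ c k V) :
    MonoCopy (SimpleGraph.completeGraph (Fin k)) ⊤ χ c := by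
  obtain ⟨S, -, hSk, hS⟩ := h
  let e : Fin k ↪ β := (S.equivFinOfCardEq hSk).symm.toEmbedding.trans (Embedding.subtype _)
  refine ⟨e, fun a b hab => e.injective.ne hab, fun a b hab => ?_⟩
  exact hS ((S.equivFinOfCardEq hSk).symm a).2 ((S.equivFinOfCardEq hSk).symm b).2
    (e.injective.ne hab)

end Copies

theorem ramsey2_le_of_isRamseyFor {k n : ℕ} {G : SimpleGraph (Fin n)}
    (h : IsRamseyFor (SimpleGraph.completeGraph (Fin k)) G) : ramsey2 k k ≤ n :=
  ramsey2_le fun χ hχ => by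
    obtain ⟨_ | _, hc⟩ := h χ hχ
    exacts [Or.inr hc.hasMonoSubset, Or.inl hc.hasMonoSubset]

theorem isRamseyFor_top_ramsey2 (k : ℕ) :
    IsRamseyFor (SimpleGraph.completeGraph (Fin k)) (⊤ : SimpleGraph (Fin (ramsey2 k k))) :=
  fun χ hχ => (ramseyArrows_ramsey2 k k χ hχ).elim
    (fun h => ⟨true, h.monoCopy_top⟩) (fun h => ⟨false, h.monoCopy_top⟩)

theorem Function.Embedding.exists_sum_extension {α β γ : Type*} [Fintype α] [Fintype β]
    [Fintype γ] (e : α ↪ β) (h : Fintype.card α + Fintype.card γ ≤ Fintype.card β) :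
    ∃ g : α ⊕ γ ↪ β, ∀ a, g (Sum.inl a) = e a := by
  classical
  have hcompl : Fintype.card γ ≤ Fintype.card ↥(Set.range e)ᶜ := by
    rw [Fintype.card_compl_set, Set.card_range_of_injective e.injective]
    omega
  obtain ⟨u⟩ := Embedding.nonempty_of_card_le hcompl
  refine ⟨(Embedding.sumMap (Equiv.ofInjective e e.injective).toEmbedding u).trans
    (Equiv.Set.sumCompl _).toEmbedding, fun a => ?_⟩
  simp

theorem cliquesUnion_one_adj {k f : ℕ} {x y : Fin k ⊕ Fin f × Fin 1} :
    (cliquesUnion k f 1).Adj x y ↔ ∃ a b, a ≠ b ∧ x = Sum.inl a ∧ y = Sum.inl b := by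
  simp only [cliquesUnion, SimpleGraph.fromRel_adj]
  aesop

section CliquesUnion

variable {β : Type*} {G : SimpleGraph β} {χ : β → β → Bool} {c : Bool} {k f : ℕ}

theorem MonoCopy.of_cliquesUnion_one (h : MonoCopy (cliquesUnion k f 1) G χ c) :
    MonoCopy (SimpleGraph.completeGraph (Fin k)) G χ c :=
  let ⟨g, hadj, hcol⟩ := h
  ⟨Embedding.inl.trans g, fun a b hab => hadj _ _ (cliquesUnion_one_adj.mpr ⟨a, b, hab, rfl, rfl⟩),
    fun a b hab => hcol _ _ (cliquesUnion_one_adj.mpr ⟨a, b, hab, rfl, rfl⟩)⟩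

theorem MonoCopy.cliquesUnion_one [Fintype β]
    (h : MonoCopy (SimpleGraph.completeGraph (Fin k)) G χ c) (hcard : k + f ≤ Fintype.card β) :
    MonoCopy (cliquesUnion k f 1) G χ c := by
  obtain ⟨e, hadj, hcol⟩ := h
  obtain ⟨g, hg⟩ := e.exists_sum_extension (γ := Fin f × Fin 1) (by simpa using hcard)
  refine ⟨g, fun x y hxy => ?_, fun x y hxy => ?_⟩ <;>
    obtain ⟨a, b, hab, rfl, rfl⟩ := cliquesUnion_one_adj.mp hxy
  · simpa only [hg] using hadj a b hab
  · simpa only [hg] using hcol a b hab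

theorem isRamseyFor_cliquesUnion_one_iff [Fintype β] :
    IsRamseyFor (cliquesUnion k f 1) G ↔
      IsRamseyFor (SimpleGraph.completeGraph (Fin k)) G ∧ k + f ≤ Fintype.card β := by
  refine ⟨fun h => ⟨fun χ hχ => (h χ hχ).imp fun _ => MonoCopy.of_cliquesUnion_one, ?_⟩,
    fun ⟨h, hcard⟩ χ hχ => (h χ hχ).imp fun _ hc => hc.cliquesUnion_one hcard⟩
  simpa using h.card_le

end CliquesUnion

theorem ramseyEquiv_clique_add_isolated_iff_general (k : ℕ) (f : ℕ) :
    RamseyEquiv (SimpleGraph.completeGraph (Fin k)) (cliquesUnion k f 1) ↔ f ≤ ramsey2 k k - k := by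
  have hR := isRamseyFor_top_ramsey2 k
  have hkR : k ≤ ramsey2 k k := by simpa using hR.card_le
  simp only [RamseyEquiv, isRamseyFor_cliquesUnion_one_iff, Fintype.card_fin, iff_self_and]
  constructor
  · intro h
    have := h _ ⊤ hR
    omega
  · intro hf n G hG
    have := ramsey2_le_of_isRamseyFor hG
    omega

/-- `f(k,1) = R(k,k) - k`: the graph `K_k + f·K_1` (a `K_k` plus `f` isolated vertices)
is Ramsey-equivalent to `K_k` if and only if `f ≤ R(k,k) - k`. -/
theorem ramseyEquiv_clique_add_isolated_iff (k : ℕ) (hk : 2 ≤ k) (f : ℕ) :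
    RamseyEquiv (SimpleGraph.completeGraph (Fin k)) (cliquesUnion k f 1) ↔ f ≤ ramsey2 k k - k :=
  ramseyEquiv_clique_add_isolated_iff_general k f
end

section
/- Suppose H = (V, E) is an r-uniform hypergraph of girth at least 4 (no two hyperedges share two or more vertices, and no 3 hyperedges form a circuit), and F is the graph on V formed by placing a copy of a fixed graph F₀ (on r vertices) inside each hyperedge. Then every triangle of F is contained within a single hyperedge of H; consequently, if F₀ is K_k-free, then F is K_k-free (for k ≥ 3). -/
/-- Let `E` be an `r`-uniform hypergraph of girth at least 4 (no two distinct hyperedges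
share two or more vertices, and no three hyperedges form a circuit of length 3), and let
`F` be the graph obtained by placing a copy of the `r`-vertex graph `F₀` (via `φ e`)
inside each hyperedge. Then every triangle of `F` lies inside a single hyperedge;
consequently, if `F₀` is `K_k`-free (`k ≥ 3`) then so is `F`. -/
theorem triangles_in_hyperedges_and_cliqueFree {α V : Type} [Fintype α] [DecidableEq V]
    (k r : ℕ) (hk : 3 ≤ k) (hr : Fintype.card α = r)
    (F₀ : SimpleGraph α)
    (E : Finset (Finset V))
    (huni : ∀ e ∈ E, e.card = r)
    (hpair : ∀ e₁ ∈ E, ∀ e₂ ∈ E, e₁ ≠ e₂ → (e₁ ∩ e₂).card ≤ 1)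
    (hcirc3 : ¬ ∃ e₁ e₂ e₃, e₁ ∈ E ∧ e₂ ∈ E ∧ e₃ ∈ E ∧
      e₁ ≠ e₂ ∧ e₂ ≠ e₃ ∧ e₁ ≠ e₃ ∧
      ∃ v₁ v₂ v₃ : V, v₁ ≠ v₂ ∧ v₂ ≠ v₃ ∧ v₁ ≠ v₃ ∧
        v₁ ∈ e₁ ∧ v₁ ∈ e₂ ∧ v₂ ∈ e₂ ∧ v₂ ∈ e₃ ∧ v₃ ∈ e₃ ∧ v₃ ∈ e₁)
    (φ : Finset V → (α ↪ V))
    (hφ : ∀ e ∈ E, ∀ a : α, φ e a ∈ e)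
    (F : SimpleGraph V)
    (hF : ∀ x y, F.Adj x y ↔ x ≠ y ∧ ∃ e ∈ E, ∃ a b : α, F₀.Adj a b ∧
      ((x = φ e a ∧ y = φ e b) ∨ (y = φ e a ∧ x = φ e b))) :
    (∀ x y z : V, F.Adj x y → F.Adj y z → F.Adj x z →
      ∃ e ∈ E, x ∈ e ∧ y ∈ e ∧ z ∈ e) ∧
    (F₀.CliqueFree k → F.CliqueFree k) := by
  have hedge : ∀ x y, F.Adj x y → ∃ e ∈ E, x ∈ e ∧ y ∈ e := by
    intro x y hxy
    obtain ⟨-, e, he, a, b, -, h⟩ := (hF x y).1 hxy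
    rcases h with ⟨hx, hy⟩ | ⟨hy, hx⟩
    · exact ⟨e, he, hx ▸ hφ e he a, hy ▸ hφ e he b⟩
    · exact ⟨e, he, hx ▸ hφ e he b, hy ▸ hφ e he a⟩
  have huniq : ∀ e ∈ E, ∀ e' ∈ E, ∀ x y : V, x ≠ y → x ∈ e → y ∈ e → x ∈ e' → y ∈ e' →
      e = e' := by
    intro e he e' he' x y hxy hx hy hx' hy'
    by_contra hne
    have h1 := hpair e he e' he' hne
    have hsub : ({x, y} : Finset V) ⊆ e ∩ e' := by
      intro v hv
      simp only [Finset.mem_insert, Finset.mem_singleton] at hv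
      rcases hv with rfl | rfl <;> simp [Finset.mem_inter, *]
    have hc : ({x, y} : Finset V).card = 2 := Finset.card_pair hxy
    have := Finset.card_le_card hsub
    omega
  have htri : ∀ x y z : V, F.Adj x y → F.Adj y z → F.Adj x z →
      ∃ e ∈ E, x ∈ e ∧ y ∈ e ∧ z ∈ e := by
    intro x y z hxy hyz hxz
    obtain ⟨e₁, he₁, hx1, hy1⟩ := hedge x y hxy
    obtain ⟨e₂, he₂, hy2, hz2⟩ := hedge y z hyz
    obtain ⟨e₃, he₃, hx3, hz3⟩ := hedge x z hxz
    by_cases h12 : e₁ = e₂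
    · exact ⟨e₁, he₁, hx1, hy1, h12 ▸ hz2⟩
    by_cases h23 : e₂ = e₃
    · exact ⟨e₂, he₂, h23 ▸ hx3, hy2, hz2⟩
    by_cases h13 : e₁ = e₃
    · exact ⟨e₁, he₁, hx1, hy1, h13 ▸ hz3⟩
    exact absurd ⟨e₁, e₂, e₃, he₁, he₂, he₃, h12, h23, h13,
      y, z, x, hyz.ne, hxz.ne', hxy.ne', hy1, hy2, hz2, hz3, hx3, hx1⟩ hcirc3
  refine ⟨htri, ?_⟩
  intro h0 S hS
  have hcard : S.card = k := hS.2
  have h2 : 1 < S.card := by omega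
  obtain ⟨x, hx, y, hy, hxy⟩ := Finset.one_lt_card.1 h2
  have hadjxy : F.Adj x y := hS.1 hx hy hxy
  obtain ⟨e, he, hxe, hye⟩ := hedge x y hadjxy
  -- all of S lies in e
  have hSe : ∀ z ∈ S, z ∈ e := by
    intro z hz
    by_cases hzx : z = x
    · exact hzx ▸ hxe
    by_cases hzy : z = y
    · exact hzy ▸ hye
    have hadjyz : F.Adj y z := hS.1 hy hz (Ne.symm hzy)
    have hadjxz : F.Adj x z := hS.1 hx hz (Ne.symm hzx)
    obtain ⟨e', he', hxe', hye', hze'⟩ := htri x y z hadjxy hadjyz hadjxz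
    exact (huniq e he e' he' x y hxy hxe hye hxe' hye') ▸ hze'
  -- φ e is surjective onto e
  have himg : Finset.image (φ e) Finset.univ = e := by
    apply Finset.eq_of_subset_of_card_le
    · intro v hv
      simp only [Finset.mem_image, Finset.mem_univ, true_and] at hv
      obtain ⟨a, rfl⟩ := hv
      exact hφ e he a
    · rw [Finset.card_image_of_injective _ (φ e).injective, Finset.card_univ, hr, huni e he]
  classical
  -- pull back the clique
  set T : Finset α := Finset.univ.filter (fun a => φ e a ∈ S) with hT
  have hTimg : Finset.image (φ e) T = S := by
    apply Finset.Subset.antisymm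
    · intro v hv
      simp only [hT, Finset.mem_image, Finset.mem_filter, Finset.mem_univ, true_and] at hv
      obtain ⟨a, ha, rfl⟩ := hv
      exact ha
    · intro v hv
      have : v ∈ Finset.image (φ e) Finset.univ := by rw [himg]; exact hSe v hv
      simp only [Finset.mem_image, Finset.mem_univ, true_and] at this
      obtain ⟨a, rfl⟩ := this
      simp only [hT, Finset.mem_image, Finset.mem_filter, Finset.mem_univ, true_and]
      exact ⟨a, hv, rfl⟩
  have hTcard : T.card = k := by
    rw [← hcard, ← hTimg, Finset.card_image_of_injective _ (φ e).injective]
  have hTclique : F₀.IsNClique k T := by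
    refine ⟨?_, hTcard⟩
    intro a ha b hb hab
    simp only [hT, Finset.coe_filter, Set.mem_setOf_eq, Finset.mem_univ, true_and] at ha hb
    have hne : φ e a ≠ φ e b := fun h => hab ((φ e).injective h)
    have hadj : F.Adj (φ e a) (φ e b) := hS.1 ha hb hne
    obtain ⟨-, e', he', a', b', hadj', h⟩ := (hF _ _).1 hadj
    have hee' : e = e' := by
      rcases h with ⟨h1, h2⟩ | ⟨h1, h2⟩
      · exact huniq e he e' he' (φ e a) (φ e b) hne (hφ e he a) (hφ e he b)
          (h1 ▸ hφ e' he' a') (h2 ▸ hφ e' he' b')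
      · exact huniq e he e' he' (φ e a) (φ e b) hne (hφ e he a) (hφ e he b)
          (h2 ▸ hφ e' he' b') (h1 ▸ hφ e' he' a')
    subst hee'
    rcases h with ⟨h1, h2⟩ | ⟨h1, h2⟩
    · rwa [(φ e).injective h1, (φ e).injective h2]
    · rw [(φ e).injective h1, (φ e).injective h2]
      exact hadj'.symm
  exact h0 T hTclique
end

section
/- For all integers r ≥ 2, m ≥ 2 and every ε > 0, there exists an r-uniform hypergraph with girth at least m and independence number less than ε·n, where n is the number of vertices. -/
/-!
Choose `n = q ^ m` and `b` with `n ^ (r - 1) = q * b`, and make every `r`-set of `n` vertices an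
edge independently with probability `1 / b`. There are at most `n ^ ((r - 1) * s)` potential
circuits of length `s`, each present with probability `b ^ (-s)`, so the expected number of circuits
shorter than `m` is at most `m * q ^ (m - 1)`, and by Markov's inequality it is at most twice that
with probability at least `1 / 2`. A fixed set of `k = ⌊ε n / 2⌋` vertices spans no edge with
probability `(1 - 1 / b) ^ (k.choose r) ≤ e ^ (-(n + 1))`, as `k.choose r ≥ b * (n + 1)` for large
`q`; by the union bound some outcome has both properties. Deleting every edge through a vertex of a
short circuit leaves no short circuit and raises the independence number by at most the number
`O(m ^ 2 * q ^ (m - 1)) ≤ ε n / 2` of these vertices.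
-/

open Finset Function

theorem card_filter_forall_mem_eq {α β : Type*} [Fintype α] [DecidableEq α] [Fintype β]
    [DecidableEq β] (T : Finset α) (A : Finset β) :
    #{ω : α → β | ∀ a ∈ T, ω a ∈ A} = #A ^ #T * Fintype.card β ^ (Fintype.card α - #T) := by
  have : ({ω : α → β | ∀ a ∈ T, ω a ∈ A} : Finset _) =
      Fintype.piFinset fun a => if a ∈ T then A else univ := by
    ext ω
    simp only [mem_filter, mem_univ, true_and, Fintype.mem_piFinset]
    refine forall_congr' fun a => ?_
    split_ifs <;> simp [*]
  rw [this, Fintype.card_piFinset]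
  simp_rw [apply_ite card, card_univ]
  rw [prod_ite, prod_const, prod_const, filter_mem_eq_inter, univ_inter, filter_not,
    filter_mem_eq_inter, univ_inter, card_univ_sdiff]

theorem exists_le_two_mul_and_not_of_sum_le {Ω : Type*} [Fintype Ω] (X : Ω → ℕ) (Q : Ω → Prop)
    [DecidablePred Q] {a : ℕ} (hX : ∑ ω, X ω ≤ a * Fintype.card Ω)
    (hQ : 2 * #{ω | Q ω} < Fintype.card Ω) : ∃ ω, X ω ≤ 2 * a ∧ ¬Q ω := by
  classical
  by_contra! h
  have hmarkov : (2 * a + 1) * #{ω | 2 * a < X ω} ≤ a * Fintype.card Ω := by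
    calc (2 * a + 1) * #{ω | 2 * a < X ω} ≤ ∑ ω ∈ {ω | 2 * a < X ω}, X ω := by
          rw [mul_comm, ← smul_eq_mul]
          exact card_nsmul_le_sum _ _ _ fun ω hω => (mem_filter.1 hω).2
      _ ≤ ∑ ω, X ω := sum_le_sum_of_subset (filter_subset _ _)
      _ ≤ a * Fintype.card Ω := hX
  have hcover : Fintype.card Ω ≤ #{ω | 2 * a < X ω} + #{ω | Q ω} := by
    rw [← card_univ]
    refine (card_le_card fun ω _ => ?_).trans (card_union_le _ _)
    by_cases hω : 2 * a < X ω
    · exact mem_union_left _ (mem_filter.2 ⟨mem_univ _, hω⟩)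
    · exact mem_union_right _ (mem_filter.2 ⟨mem_univ _, h ω (not_lt.1 hω)⟩)
  nlinarith

theorem two_mul_choose_mul_sub_one_pow_lt {n k b M : ℕ} (hb : 0 < b) (hM : b * (n + 1) ≤ M) :
    2 * n.choose k * (b - 1) ^ M < b ^ M := by
  have hbR : (0 : ℝ) < b := by exact_mod_cast hb
  have hsub : ((b - 1 : ℕ) : ℝ) = (1 - 1 / b) * b := by
    rw [Nat.cast_sub (by omega)]; field_simp; simp
  have hp : (0 : ℝ) ≤ 1 - 1 / b := by
    rw [sub_nonneg, div_le_one hbR]; exact_mod_cast hb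
  have hexp : (1 - 1 / b : ℝ) ^ M ≤ Real.exp (-1) ^ (n + 1) := by
    calc (1 - 1 / b : ℝ) ^ M ≤ Real.exp (-(1 / b)) ^ M :=
          pow_le_pow_left₀ hp (Real.one_sub_le_exp_neg _) M
      _ = Real.exp (M * -(1 / b)) := (Real.exp_nat_mul _ _).symm
      _ ≤ Real.exp ((n + 1 : ℕ) * -1) := by
          rw [Real.exp_le_exp, mul_neg, mul_neg, neg_le_neg_iff, mul_one_div, mul_one,
            le_div_iff₀ hbR]
          exact_mod_cast mul_comm b _ ▸ hM
      _ = Real.exp (-1) ^ (n + 1) := Real.exp_nat_mul _ _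
  have key : (2 * n.choose k : ℝ) * (1 - 1 / b) ^ M < 1 := by
    calc (2 * n.choose k : ℝ) * (1 - 1 / b) ^ M ≤ 2 ^ (n + 1) * Real.exp (-1) ^ (n + 1) := by
          refine mul_le_mul ?_ hexp (by positivity) (by positivity)
          rw [pow_succ']; gcongr; exact_mod_cast n.choose_le_two_pow k
      _ < 2 ^ (n + 1) * (1 / 2) ^ (n + 1) := by
          gcongr
          exact Real.exp_neg_one_lt_half
      _ = 1 := by rw [← mul_pow]; norm_num
  have : (2 * n.choose k * (b - 1 : ℕ) ^ M : ℝ) < b ^ M := by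
    rw [hsub, mul_pow, ← mul_assoc]
    exact mul_lt_of_lt_one_left (by positivity) key
  exact_mod_cast this

theorem pow_div_le_choose_floor_half {r : ℕ} {x : ℝ} (hx : 4 * r ≤ x) :
    (x / (4 * r)) ^ r ≤ (⌊x / 2⌋₊.choose r : ℝ) := by
  set k := ⌊x / 2⌋₊
  have hk : x / 4 ≤ ((k + 1 - r : ℕ) : ℝ) := by
    have hfloor : x / 2 < k + 1 := Nat.lt_floor_add_one _
    rw [Nat.cast_sub (by exact_mod_cast (show (r : ℝ) ≤ k + 1 by linarith)), Nat.cast_add,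
      Nat.cast_one]
    linarith
  calc (x / (4 * r)) ^ r = (x / 4) ^ r / (r : ℝ) ^ r := by rw [div_mul_eq_div_div, div_pow]
    _ ≤ ((k + 1 - r : ℕ) : ℝ) ^ r / r.factorial := by
        gcongr
        · linarith
        · exact_mod_cast r.factorial_le_pow
    _ ≤ k.choose r := Nat.pow_le_choose r k

def cycSucc {s : ℕ} (j : Fin s) : Fin s := ⟨(j.val + 1) % s, Nat.mod_lt _ j.pos⟩

theorem cycSucc_eq_finRotate {s : ℕ} (j : Fin s) : cycSucc j = finRotate s j := by
  have := j.neZero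
  ext
  simp [cycSucc, finRotate_apply, Fin.val_add]

theorem cycSucc_surjective (s : ℕ) : Surjective (cycSucc : Fin s → Fin s) := by
  simpa only [funext cycSucc_eq_finRotate] using (finRotate s).surjective

theorem cycSucc_ne {s : ℕ} (hs : 2 ≤ s) (j : Fin s) : cycSucc j ≠ j := by
  have := j.neZero
  rw [cycSucc_eq_finRotate, finRotate_apply]
  simp only [ne_eq, add_eq_left, Fin.one_eq_zero_iff]
  omega

section Hypergraph

variable {V : Type*}

def IsCircuit {s : ℕ} (E : Finset (Finset V)) (e : Fin s → Finset V) (v : Fin s → V) : Prop :=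
  Injective e ∧ Injective v ∧ (∀ j, e j ∈ E) ∧ ∀ j, v j ∈ e j ∧ v j ∈ e (cycSucc j)

theorem IsCircuit.mono {s : ℕ} {E F : Finset (Finset V)} {e : Fin s → Finset V} {v : Fin s → V}
    (hEF : E ⊆ F) (h : IsCircuit E e v) : IsCircuit F e v :=
  ⟨h.1, h.2.1, fun j => hEF (h.2.2.1 j), h.2.2.2⟩

variable [DecidableEq V]

theorem IsCircuit.pair_subset {s : ℕ} {E : Finset (Finset V)} {e : Fin s → Finset V} {v : Fin s → V}
    (h : IsCircuit E e v) (j : Fin s) : {v j, v (cycSucc j)} ⊆ e (cycSucc j) := by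
  simpa [insert_subset_iff] using ⟨(h.2.2.2 j).2, (h.2.2.2 (cycSucc j)).1⟩

theorem card_lt_add_card_of_forall_exists_subset {E : Finset (Finset V)} {B S : Finset V} {k : ℕ}
    (hk : ∀ T : Finset V, #T = k → ∃ f ∈ E, f ⊆ T)
    (hS : ∀ f ∈ {f ∈ E | Disjoint f B}, ¬f ⊆ S) : #S < k + #B := by
  have hSB : #(S \ B) < k := by
    by_contra! h
    obtain ⟨T, hTS, hT⟩ := exists_subset_card_eq h
    obtain ⟨f, hf, hfT⟩ := hk T hT
    have hfSB := hfT.trans hTS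
    exact hS f (mem_filter.2 ⟨hf, disjoint_of_subset_left hfSB sdiff_disjoint⟩)
      (hfSB.trans sdiff_subset)
  exact (card_le_card_sdiff_add_card (t := B)).trans_lt (by omega)

end Hypergraph

section FiniteHypergraph

variable {V : Type*} [Fintype V]

open Classical in
noncomputable def circuits (E : Finset (Finset V)) (s : ℕ) :
    Finset ((Fin s → Finset V) × (Fin s → V)) :=
  {c | IsCircuit E c.1 c.2}

theorem mem_circuits {E : Finset (Finset V)} {s : ℕ} {c : (Fin s → Finset V) × (Fin s → V)} :
    c ∈ circuits E s ↔ IsCircuit E c.1 c.2 := by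
  simp [circuits]

variable [DecidableEq V]

/-- A circuit is determined by its vertices `v` and the `(r - 2)`-sets
`e (j + 1) \ {v j, v (j + 1)}`. -/
theorem card_circuits_le {E : Finset (Finset V)} {r s : ℕ} (hE : ∀ f ∈ E, #f = r)
    (hr : 2 ≤ r) (hs : 2 ≤ s) : #(circuits E s) ≤ Fintype.card V ^ ((r - 1) * s) := by
  set n := Fintype.card V
  let code : (Fin s → Finset V) × (Fin s → V) → (Fin s → V) × (Fin s → Finset V) :=
    fun c => (c.2, fun j => c.1 (cycSucc j) \ {c.2 j, c.2 (cycSucc j)})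
  have hmaps : ∀ c ∈ circuits E s,
      code c ∈ univ ×ˢ Fintype.piFinset fun _ => powersetCard (r - 2) univ := by
    intro c hc
    have hc := mem_circuits.1 hc
    simp only [mem_product, mem_univ, Fintype.mem_piFinset, mem_powersetCard_univ, true_and, code]
    intro j
    rw [card_sdiff_of_subset (hc.pair_subset j), hE _ (hc.2.2.1 _),
      card_pair (hc.2.1.ne (cycSucc_ne hs j).symm)]
  have hinj : Set.InjOn code (circuits E s) := by
    rintro ⟨e, v⟩ hc ⟨e', v'⟩ hc' heq
    simp only [code, Prod.mk.injEq] at heq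
    obtain ⟨rfl, hdiff⟩ := heq
    have hsucc : e ∘ cycSucc = e' ∘ cycSucc := funext fun j =>
      calc e (cycSucc j) = e (cycSucc j) \ {v j, v (cycSucc j)} ∪ {v j, v (cycSucc j)} :=
            (sdiff_union_of_subset ((mem_circuits.1 hc).pair_subset j)).symm
        _ = e' (cycSucc j) \ {v j, v (cycSucc j)} ∪ {v j, v (cycSucc j)} := by
            rw [congrFun hdiff j]
        _ = e' (cycSucc j) := sdiff_union_of_subset ((mem_circuits.1 hc').pair_subset j)
    rw [(cycSucc_surjective s).injective_comp_right hsucc]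
  calc #(circuits E s) ≤ #(univ ×ˢ Fintype.piFinset fun _ : Fin s => powersetCard (r - 2) univ) :=
        card_le_card_of_injOn code (fun c hc => hmaps c hc) hinj
    _ = n ^ s * (n.choose (r - 2)) ^ s := by simp [n]
    _ ≤ n ^ s * (n ^ (r - 2)) ^ s := by gcongr; exact n.choose_le_pow _
    _ = n ^ ((r - 1) * s) := by
      rw [← pow_mul, ← pow_add, show r - 1 = r - 2 + 1 by omega, add_one_mul, add_comm]

noncomputable def shortCircuitVertices (E : Finset (Finset V)) (m : ℕ) : Finset V :=
  (Ico 2 m).biUnion fun s => (circuits E s).biUnion fun c => univ.image c.2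

theorem card_shortCircuitVertices_le (E : Finset (Finset V)) (m : ℕ) :
    #(shortCircuitVertices E m) ≤ m * ∑ s ∈ Ico 2 m, #(circuits E s) := by
  rw [mul_sum]
  refine card_biUnion_le.trans (sum_le_sum fun s hs => ?_)
  rw [mul_comm]
  refine card_biUnion_le_card_mul _ _ _ fun c _ => card_image_le.trans ?_
  rw [card_univ, Fintype.card_fin]
  exact (mem_Ico.1 hs).2.le

theorem not_isCircuit_filter_disjoint_shortCircuitVertices {E : Finset (Finset V)} {m s : ℕ}
    (hs : 2 ≤ s) (hsm : s < m) (e : Fin s → Finset V) (v : Fin s → V) :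
    ¬IsCircuit {f ∈ E | Disjoint f (shortCircuitVertices E m)} e v := by
  intro h
  let j : Fin s := ⟨0, by omega⟩
  have hv : v j ∈ shortCircuitVertices E m :=
    mem_biUnion.2 ⟨s, mem_Ico.2 ⟨hs, hsm⟩, mem_biUnion.2
      ⟨(e, v), mem_circuits.2 (h.mono (filter_subset _ _)), mem_image_of_mem _ (mem_univ j)⟩⟩
  exact disjoint_left.1 (mem_filter.1 (h.2.2.1 j)).2 (h.2.2.2 j).1 hv

variable {b : ℕ} [NeZero b]

/-- Summing over all `ω` computes `b ^ 2 ^ card V` times the expectation for the random hypergraph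
in which each `r`-set is an edge independently with probability `1 / b`. -/
def coinEdges (r : ℕ) (ω : Finset V → Fin b) : Finset (Finset V) :=
  {f ∈ powersetCard r univ | ω f = 0}

theorem card_filter_mem_circuits_coinEdges_mul_eq {r s : ℕ}
    {c : (Fin s → Finset V) × (Fin s → V)} (hc : c ∈ circuits (powersetCard r univ) s) :
    #{ω : Finset V → Fin b | c ∈ circuits (coinEdges r ω) s} * b ^ s =
      b ^ 2 ^ Fintype.card V := by
  have hc := mem_circuits.1 hc
  have hT : #(univ.image c.1) = s := by
    rw [card_image_of_injective _ hc.1, card_univ, Fintype.card_fin]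
  have : ({ω | c ∈ circuits (coinEdges r ω) s} : Finset (Finset V → Fin b)) =
      ({ω | ∀ f ∈ univ.image c.1, ω f ∈ ({0} : Finset (Fin b))} : Finset (Finset V → Fin b)) := by
    ext ω
    simp [mem_circuits, IsCircuit, coinEdges, hc.1, hc.2.1, hc.2.2.2,
      fun j => (mem_powersetCard.1 (hc.2.2.1 j)).2]
  rw [this, card_filter_forall_mem_eq, hT, card_singleton, one_pow, one_mul, Fintype.card_fin,
    Fintype.card_finset, ← pow_add, Nat.sub_add_cancel]
  exact hT ▸ (card_le_univ _).trans_eq Fintype.card_finset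

theorem sum_card_circuits_coinEdges_mul_le {r s : ℕ} (hr : 2 ≤ r) (hs : 2 ≤ s) :
    (∑ ω : Finset V → Fin b, #(circuits (coinEdges r ω) s)) * b ^ s ≤
      Fintype.card V ^ ((r - 1) * s) * b ^ 2 ^ Fintype.card V := by
  set C := circuits (powersetCard r (univ : Finset V)) s
  have hsub : ∀ ω : Finset V → Fin b, circuits (coinEdges r ω) s =
      C.bipartiteAbove (fun ω c => c ∈ circuits (coinEdges r ω) s) ω := fun ω => by
    rw [bipartiteAbove, filter_mem_eq_inter, inter_eq_right.2]
    exact fun c hc => mem_circuits.2 ((mem_circuits.1 hc).mono (filter_subset _ _))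
  calc (∑ ω : Finset V → Fin b, #(circuits (coinEdges r ω) s)) * b ^ s
      = ∑ c ∈ C, #{ω : Finset V → Fin b | c ∈ circuits (coinEdges r ω) s} * b ^ s := by
        rw [sum_congr rfl fun ω _ => congrArg card (hsub ω),
          sum_card_bipartiteAbove_eq_sum_card_bipartiteBelow, sum_mul]
        rfl
    _ = #C * b ^ 2 ^ Fintype.card V := by
        rw [sum_congr rfl fun c hc => card_filter_mem_circuits_coinEdges_mul_eq hc, sum_const,
          smul_eq_mul]
    _ ≤ Fintype.card V ^ ((r - 1) * s) * b ^ 2 ^ Fintype.card V := by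
        gcongr
        exact card_circuits_le (fun f hf => (mem_powersetCard.1 hf).2) hr hs

theorem card_filter_exists_independent_coinEdges_mul_le (r k : ℕ) :
    #{ω : Finset V → Fin b | ∃ S : Finset V, #S = k ∧ ∀ f ∈ coinEdges r ω, ¬f ⊆ S} *
        b ^ k.choose r ≤
      (Fintype.card V).choose k * (b - 1) ^ k.choose r * b ^ 2 ^ Fintype.card V := by
  set M := k.choose r
  have hcover : ({ω : Finset V → Fin b | ∃ S : Finset V, #S = k ∧ ∀ f ∈ coinEdges r ω, ¬f ⊆ S} :
      Finset _) ⊆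
      (powersetCard k univ).biUnion fun S =>
        ({ω : Finset V → Fin b | ∀ f ∈ powersetCard r S, ω f ∈ univ.erase 0} : Finset _) := by
    intro ω hω
    obtain ⟨S, hSk, hS⟩ := (mem_filter.1 hω).2
    refine mem_biUnion.2 ⟨S, mem_powersetCard_univ.2 hSk, mem_filter.2 ⟨mem_univ _, ?_⟩⟩
    intro f hf
    obtain ⟨hfS, hfr⟩ := mem_powersetCard.1 hf
    exact mem_erase.2 ⟨fun h0 => hS f (mem_filter.2 ⟨mem_powersetCard_univ.2 hfr, h0⟩) hfS,
      mem_univ _⟩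
  have hcount : ∀ S ∈ powersetCard k (univ : Finset V),
      #{ω : Finset V → Fin b | ∀ f ∈ powersetCard r S, ω f ∈ univ.erase 0} * b ^ M =
        (b - 1) ^ M * b ^ 2 ^ Fintype.card V := fun S hS => by
    have hT : #(powersetCard r S) = M := by rw [card_powersetCard, (mem_powersetCard_univ.1 hS)]
    rw [card_filter_forall_mem_eq, hT, card_erase_of_mem (mem_univ _), card_univ,
      Fintype.card_fin, Fintype.card_finset, mul_assoc, ← pow_add, Nat.sub_add_cancel]
    exact hT ▸ (card_le_univ _).trans_eq Fintype.card_finset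
  calc _ ≤ (∑ S ∈ powersetCard k (univ : Finset V),
          #{ω : Finset V → Fin b | ∀ f ∈ powersetCard r S, ω f ∈ univ.erase 0}) * b ^ M := by
        gcongr
        exact (card_le_card hcover).trans card_biUnion_le
    _ = _ := by
        rw [sum_mul, sum_congr rfl hcount, sum_const, card_powersetCard, card_univ, smul_eq_mul,
          mul_assoc]

theorem exists_coinEdges_few_short_circuits {r m q k : ℕ} (hr : 2 ≤ r) (hq : 1 ≤ q)
    (hVq : Fintype.card V ^ (r - 1) = q * b) (hk : b * (Fintype.card V + 1) ≤ k.choose r) :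
    ∃ ω : Finset V → Fin b,
      ∑ s ∈ Ico 2 m, #(circuits (coinEdges r ω) s) ≤ 2 * m * q ^ (m - 1) ∧
      ∀ S : Finset V, #S = k → ∃ f ∈ coinEdges r ω, f ⊆ S := by
  have hb : 0 < b := Nat.pos_of_ne_zero (NeZero.ne b)
  have hΩ : Fintype.card (Finset V → Fin b) = b ^ 2 ^ Fintype.card V := by simp
  have hfirst : ∀ s ∈ Ico 2 m, ∑ ω : Finset V → Fin b, #(circuits (coinEdges r ω) s) ≤
      q ^ (m - 1) * b ^ 2 ^ Fintype.card V :=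
    fun s hs => by
      obtain ⟨hs2, hsm⟩ := mem_Ico.1 hs
      refine le_of_mul_le_mul_right ?_ (pow_pos hb s)
      calc _ ≤ Fintype.card V ^ ((r - 1) * s) * b ^ 2 ^ Fintype.card V :=
            sum_card_circuits_coinEdges_mul_le hr hs2
        _ = q ^ s * b ^ 2 ^ Fintype.card V * b ^ s := by rw [pow_mul, hVq]; ring
        _ ≤ _ := by gcongr; omega
  have hcircuits : ∑ ω : Finset V → Fin b, ∑ s ∈ Ico 2 m, #(circuits (coinEdges r ω) s) ≤
      m * q ^ (m - 1) * Fintype.card (Finset V → Fin b) := by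
    rw [hΩ, sum_comm]
    calc _ ≤ ∑ _s ∈ Ico 2 m, q ^ (m - 1) * b ^ 2 ^ Fintype.card V := sum_le_sum hfirst
      _ ≤ _ := by rw [sum_const, Nat.card_Ico, smul_eq_mul, ← mul_assoc]; gcongr; omega
  have hindependent : 2 * #{ω : Finset V → Fin b |
      ∃ S : Finset V, #S = k ∧ ∀ f ∈ coinEdges r ω, ¬f ⊆ S} < Fintype.card (Finset V → Fin b) := by
    rw [hΩ]
    refine lt_of_mul_lt_mul_right ?_ (Nat.zero_le (b ^ k.choose r))
    calc _ ≤ 2 * ((Fintype.card V).choose k * (b - 1) ^ k.choose r * b ^ 2 ^ Fintype.card V) := by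
          rw [mul_assoc]
          exact Nat.mul_le_mul_left 2 (card_filter_exists_independent_coinEdges_mul_le r k)
      _ < b ^ k.choose r * b ^ 2 ^ Fintype.card V := by
          rw [← mul_assoc, ← mul_assoc]
          exact Nat.mul_lt_mul_of_pos_right (two_mul_choose_mul_sub_one_pow_lt hb hk)
            (by positivity)
      _ = _ := mul_comm _ _
  obtain ⟨ω, hX, hQ⟩ := exists_le_two_mul_and_not_of_sum_le _ _ hcircuits hindependent
  push Not at hQ
  exact ⟨ω, mul_assoc 2 m _ ▸ hX, hQ⟩

end FiniteHypergraph

theorem mul_add_one_le_choose_floor {r q b n : ℕ} {ε : ℝ} (hr : 1 ≤ r) (hn : 1 ≤ n)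
    (hnr : n ^ (r - 1) = q * b) (hεn : 4 * r ≤ ε * n) (hq : 2 ≤ (ε / (4 * r)) ^ r * q) :
    b * (n + 1) ≤ ⌊ε * n / 2⌋₊.choose r := by
  have hnR : (1 : ℝ) ≤ n := by exact_mod_cast hn
  have hpow : (n : ℝ) ^ r = q * b * n := by
    rw [← pow_sub_one_mul (by omega : r ≠ 0)]; exact_mod_cast congrArg (· * n) hnr
  suffices (b * (n + 1) : ℝ) ≤ ⌊ε * n / 2⌋₊.choose r by exact_mod_cast this
  calc (b * (n + 1) : ℝ) ≤ 2 * (b * n) := by nlinarith [(Nat.cast_nonneg b : (0 : ℝ) ≤ b)]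
    _ ≤ (ε / (4 * r)) ^ r * q * (b * n) := by gcongr
    _ = (ε * n / (4 * r)) ^ r := by rw [mul_div_right_comm, mul_pow, hpow]; ring
    _ ≤ _ := pow_div_le_choose_floor_half hεn

theorem mul_two_mul_mul_pow_pred_le {m q : ℕ} {ε : ℝ} (hm : 1 ≤ m)
    (hq : 4 * (m : ℝ) ^ 2 ≤ ε * q) : (m * (2 * m * q ^ (m - 1)) : ℝ) ≤ ε * q ^ m / 2 := by
  calc (m * (2 * m * q ^ (m - 1)) : ℝ) = 4 * m ^ 2 * q ^ (m - 1) / 2 := by ring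
    _ ≤ ε * q * q ^ (m - 1) / 2 := by gcongr
    _ = ε * q ^ m / 2 := by rw [mul_assoc, ← pow_succ', Nat.sub_add_cancel hm]

/-- **Erdős–Hajnal.** For all `r, m ≥ 2` and every `ε > 0`, there exists an `r`-uniform
hypergraph with girth at least `m` (it has no circuit of length `s` for any `2 ≤ s < m`)
and independence number less than `ε·n`, where `n` is its number of vertices. -/
theorem exists_high_girth_low_independence_hypergraph
    (r m : ℕ) (hr : 2 ≤ r) (hm : 2 ≤ m) (ε : ℝ) (hε : 0 < ε) :
    ∃ (n : ℕ) (E : Finset (Finset (Fin n))),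
      (∀ e ∈ E, e.card = r) ∧
      (∀ s : ℕ, ∀ hs : 2 ≤ s, s < m →
        ¬ ∃ (e : Fin s → Finset (Fin n)) (v : Fin s → Fin n),
          Function.Injective e ∧ Function.Injective v ∧
          (∀ j, e j ∈ E) ∧
          (∀ j : Fin s, v j ∈ e j ∧
            v j ∈ e ⟨(j.val + 1) % s, Nat.mod_lt _ (by omega)⟩)) ∧
      (∀ S : Finset (Fin n), (∀ e ∈ E, ¬ e ⊆ S) → (S.card : ℝ) < ε * n) := by
  obtain ⟨q, hq2, hqm, hqr, hqc⟩ : ∃ q : ℕ, 2 ≤ q ∧ 4 * (m : ℝ) ^ 2 ≤ ε * q ∧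
      4 * (r : ℝ) ≤ ε * q ∧ 2 ≤ (ε / (4 * r)) ^ r * q := by
    have hq := tendsto_natCast_atTop_atTop (R := ℝ)
    have hεq := hq.const_mul_atTop hε
    have hcq := hq.const_mul_atTop (show 0 < (ε / (4 * r)) ^ r by positivity)
    exact ((Filter.eventually_ge_atTop 2).and ((hεq.eventually_ge_atTop _).and
      ((hεq.eventually_ge_atTop _).and (hcq.eventually_ge_atTop _)))).exists
  set n := q ^ m
  set b := q ^ (m * (r - 1) - 1)
  have : NeZero b := ⟨by positivity⟩
  have hnb : n ^ (r - 1) = q * b := by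
    rw [← pow_mul, ← pow_succ', Nat.sub_add_cancel (Nat.mul_pos (by omega) (by omega))]
  have hqn : q ≤ n := Nat.le_self_pow (by omega) q
  have hεn : 4 * (r : ℝ) ≤ ε * n := hqr.trans (by gcongr)
  obtain ⟨ω, hcirc, hdense⟩ := exists_coinEdges_few_short_circuits (V := Fin n) (b := b)
    (m := m) (q := q) (k := ⌊ε * n / 2⌋₊) hr (by omega) (by rwa [Fintype.card_fin])
    (by rw [Fintype.card_fin]; exact mul_add_one_le_choose_floor (by omega) (by omega) hnb hεn hqc)
  set B := shortCircuitVertices (coinEdges r ω) m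
  have hB : (#B : ℝ) ≤ ε * n / 2 := by
    calc (#B : ℝ) ≤ m * (2 * m * q ^ (m - 1)) := by
          exact_mod_cast (card_shortCircuitVertices_le _ _).trans (Nat.mul_le_mul_left _ hcirc)
      _ ≤ ε * n / 2 := by push_cast [n]; exact mul_two_mul_mul_pow_pred_le (by omega) hqm
  refine ⟨n, {f ∈ coinEdges r ω | Disjoint f B}, fun f hf => ?_,
    fun s hs hsm ⟨e, v, h⟩ => not_isCircuit_filter_disjoint_shortCircuitVertices hs hsm e v h,
    fun S hS => ?_⟩
  · exact (mem_powersetCard.1 (mem_filter.1 (mem_filter.1 hf).1).1).2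
  · have hS : (#S : ℝ) < ⌊ε * n / 2⌋₊ + #B := by
      exact_mod_cast card_lt_add_card_of_forall_exists_subset hdense hS
    linarith [Nat.floor_le (show 0 ≤ ε * n / 2 by positivity)]
end
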